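/- The matrices R₁ = [[5,4,-2],[-6,-5,2],[0,0,-1]], R₂ = [[3,2,-2],[-2,-1,2],[2,2,-1]], R₃ = [[1,0,0],[0,0,1],[0,1,0]], and R₄ = [[1,0,0],[0,1,-1],[0,1,0]] are isometries of the Gram matrix G = [[6,0,0],[0,-4,2],[0,2,-4]]; moreover R₁, R₂, R₃ have order 2 and R₄ has order 6. -/

import Mathlib

open Matrix

def Gnonsyz : Matrix (Fin 3) (Fin 3) ℤ := !![6, 0, 0; 0, -4, 2; 0, 2, -4]
def R₁ : Matrix (Fin 3) (Fin 3) ℤ := !![5, 4, -2; -6, -5, 2; 0, 0, -1]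
def R₂ : Matrix (Fin 3) (Fin 3) ℤ := !![3, 2, -2; -2, -1, 2; 2, 2, -1]
def R₃ : Matrix (Fin 3) (Fin 3) ℤ := !![1, 0, 0; 0, 0, 1; 0, 1, 0]
def R₄ : Matrix (Fin 3) (Fin 3) ℤ := !![1, 0, 0; 0, 1, -1; 0, 1, 0]

theorem orderOf_eq_six {G : Type*} [Monoid G] {x : G} (h6 : x ^ 6 = 1) (h2 : x ^ 2 ≠ 1)
    (h3 : x ^ 3 ≠ 1) : orderOf x = 6 := by
  refine orderOf_eq_of_pow_and_pow_div_prime (by norm_num) h6 fun p hp hdvd => ?_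
  have hp6 : p ≤ 6 := Nat.le_of_dvd (by norm_num) hdvd
  interval_cases p <;> first | exact h3 | exact h2 | omega | norm_num at hp

-- On `span {e₂, e₃}` the matrix `R₄` has characteristic polynomial `X² - X + 1`, whose roots
-- are primitive sixth roots of unity; hence its cube is `-1` there.
theorem R₄_pow_three : R₄ ^ 3 = diagonal ![1, -1, -1] := by decide

/-- `R₁, R₂, R₃, R₄` are isometries of the Gram matrix `[[6,0,0],[0,-4,2],[0,2,-4]]`;
`R₁, R₂, R₃` have order 2 and `R₄` has order 6. -/
theorem nonsyzygetic_generators_are_isometries :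
    (R₁ᵀ * Gnonsyz * R₁ = Gnonsyz ∧ R₂ᵀ * Gnonsyz * R₂ = Gnonsyz ∧
      R₃ᵀ * Gnonsyz * R₃ = Gnonsyz ∧ R₄ᵀ * Gnonsyz * R₄ = Gnonsyz) ∧
    orderOf R₁ = 2 ∧ orderOf R₂ = 2 ∧ orderOf R₃ = 2 ∧ orderOf R₄ = 6 := by
  have hR₄_pow_six : R₄ ^ 6 = 1 := by
    rw [show 6 = 3 * 2 from rfl, pow_mul, R₄_pow_three]
    decide
  have hR₄_pow_three_ne : R₄ ^ 3 ≠ 1 := by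
    rw [R₄_pow_three]
    decide
  exact ⟨by decide,
    orderOf_eq_prime (by decide) (by decide),
    orderOf_eq_prime (by decide) (by decide),
    orderOf_eq_prime (by decide) (by decide),
    orderOf_eq_six hR₄_pow_six (by decide) hR₄_pow_three_ne⟩
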